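/- Let M : [0,∞) → ℝ be continuous, with M(0) > 0 and M nondecreasing on [0,∞), continuously differentiable on [R,∞) for some R > 0. Suppose there exists θ > 0 such that M̂(t) − M(t)t/(θ+1) ≥ 0 for all t ≥ 0, where M̂(t) = ∫₀ᵗ M(s) ds, and M̂(t) − M(t)t/(θ+1) → +∞ as t → ∞. Then for every ε > 0 there exist constants C₁, C₂ > 0 such that M(t) ≤ C₁ + C₂ t^{θ+ε} for all t ≥ 0. -/

import Mathlib

/-!
Write `F = M̂`. For `t > 0` the hypothesis reads `t F'(t) ≤ (θ + 1) F(t)`, so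
`F(t) t^{-(θ+1)}` is nonincreasing and `F(t) ≤ F(1) t^{θ+1}` for `t ≥ 1`. Feeding this back
into the same inequality gives `M(t) ≤ (θ + 1) F(1) t^θ` for `t ≥ 1`, while `M(t) ≤ M(1)` on
`[0, 1]` by monotonicity.
-/

open Real MeasureTheory Filter Set

theorem hasDerivAt_integral_of_continuousOn_Ici {f : ℝ → ℝ} {a t : ℝ}
    (hf : ContinuousOn f (Ici a)) (ht : a < t) :
    HasDerivAt (fun u => ∫ s in a..u, f s) (f t) t := by
  have hint : IntervalIntegrable f volume a t :=
    (hf.mono (uIcc_of_le ht.le ▸ Icc_subset_Ici_self)).intervalIntegrable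
  have hmeas : StronglyMeasurableAtFilter f (nhds t) volume :=
    (hf.mono Ioi_subset_Ici_self).stronglyMeasurableAtFilter isOpen_Ioi t ht
  exact intervalIntegral.integral_hasDerivAt_right hint hmeas (hf.continuousAt (Ici_mem_nhds ht))

section PowerGrowth

variable {F F' : ℝ → ℝ} {k : ℝ}

theorem antitoneOn_mul_rpow_neg_of_deriv_mul_le (hF : ∀ t > 0, HasDerivAt F (F' t) t)
    (hle : ∀ t > 0, F' t * t ≤ k * F t) :
    AntitoneOn (fun t => F t * t ^ (-k)) (Ioi 0) := by
  have hderiv : ∀ t > 0, HasDerivAt (fun t => F t * t ^ (-k))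
      (t ^ (-k - 1) * (F' t * t - k * F t)) t := by
    intro t ht
    refine ((hF t ht).mul (hasDerivAt_rpow_const (Or.inl ht.ne'))).congr_deriv ?_
    have hpow : t ^ (-k) = t ^ (-k - 1) * t := by
      rw [← rpow_add_one ht.ne', sub_add_cancel]
    rw [hpow]
    ring
  refine antitoneOn_of_hasDerivWithinAt_nonpos (convex_Ioi 0)
    (f' := fun t => t ^ (-k - 1) * (F' t * t - k * F t))
    (fun t ht => (hderiv t ht).continuousAt.continuousWithinAt) ?_ ?_ <;> rw [interior_Ioi]
  · exact fun t ht => (hderiv t ht).hasDerivWithinAt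
  · exact fun t ht => mul_nonpos_of_nonneg_of_nonpos (rpow_nonneg (le_of_lt ht) _)
      (sub_nonpos.2 (hle t ht))

theorem le_mul_rpow_of_deriv_mul_le (hF : ∀ t > 0, HasDerivAt F (F' t) t)
    (hle : ∀ t > 0, F' t * t ≤ k * F t) {t : ℝ} (ht : 1 ≤ t) :
    F t ≤ F 1 * t ^ k := by
  have ht0 : 0 < t := one_pos.trans_le ht
  have hanti := antitoneOn_mul_rpow_neg_of_deriv_mul_le hF hle
    (mem_Ioi.2 one_pos) (mem_Ioi.2 ht0) ht
  simp only [one_rpow, mul_one] at hanti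
  calc F t = F t * t ^ (-k) * t ^ k := by
        rw [mul_assoc, ← rpow_add ht0, neg_add_cancel, rpow_zero, mul_one]
    _ ≤ F 1 * t ^ k := mul_le_mul_of_nonneg_right hanti (rpow_nonneg ht0.le _)

end PowerGrowth

theorem exists_le_add_mul_rpow_of_monotoneOn {f : ℝ → ℝ} {A θ ε : ℝ}
    (hf : MonotoneOn f (Ici 0)) (hf1 : 0 < f 1) (hA : ∀ t ≥ 1, f t ≤ A * t ^ θ) (hε : 0 ≤ ε) :
    ∃ C₁ > 0, ∃ C₂ > 0, ∀ t ≥ (0:ℝ), f t ≤ C₁ + C₂ * t ^ (θ + ε) := by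
  refine ⟨f 1, hf1, max A 1, lt_max_of_lt_right one_pos, fun t ht => ?_⟩
  have hC₂ : 0 ≤ max A 1 := le_max_of_le_right zero_le_one
  rcases le_total t 1 with h | h
  · have := hf ht (mem_Ici.2 zero_le_one) h
    nlinarith [mul_nonneg hC₂ (rpow_nonneg ht (θ + ε))]
  · calc f t ≤ A * t ^ θ := hA t h
      _ ≤ max A 1 * t ^ (θ + ε) := mul_le_mul (le_max_left _ _)
          (rpow_le_rpow_of_exponent_le h (by linarith)) (rpow_nonneg ht _) hC₂
      _ ≤ f 1 + max A 1 * t ^ (θ + ε) := le_add_of_nonneg_left hf1.le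

theorem kirchhoff_coefficient_growth_general (M : ℝ → ℝ) (θ : ℝ)
    (hcont : ContinuousOn M (Set.Ici 0))
    (hM0 : 0 < M 0)
    (hmono : MonotoneOn M (Set.Ici 0))
    (hθ : 0 < θ)
    (hAG : ∀ t ≥ (0:ℝ), 0 ≤ (∫ s in (0:ℝ)..t, M s) - M t * t / (θ + 1)) :
    ∀ ε > 0, ∃ C₁ > 0, ∃ C₂ > 0, ∀ t ≥ (0:ℝ), M t ≤ C₁ + C₂ * t ^ (θ + ε) := by
  intro ε hε
  set F : ℝ → ℝ := fun t => ∫ s in (0:ℝ)..t, M s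
  have hθ1 : 0 < θ + 1 := by linarith
  have hAR : ∀ t > 0, M t * t ≤ (θ + 1) * F t := fun t ht => by
    have h := hAG t ht.le
    rw [sub_nonneg, div_le_iff₀ hθ1] at h
    linarith
  have hF : ∀ t ≥ 1, F t ≤ F 1 * t ^ (θ + 1) := fun t ht =>
    le_mul_rpow_of_deriv_mul_le (fun t ht => hasDerivAt_integral_of_continuousOn_Ici hcont ht)
      hAR ht
  have hlarge : ∀ t ≥ 1, M t ≤ ((θ + 1) * F 1) * t ^ θ := fun t ht => by
    have ht0 : 0 < t := one_pos.trans_le ht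
    refine le_of_mul_le_mul_right ?_ ht0
    calc M t * t ≤ (θ + 1) * F t := hAR t ht0
      _ ≤ (θ + 1) * (F 1 * t ^ (θ + 1)) := mul_le_mul_of_nonneg_left (hF t ht) hθ1.le
      _ = (θ + 1) * F 1 * t ^ θ * t := by rw [rpow_add_one ht0.ne']; ring
  exact exists_le_add_mul_rpow_of_monotoneOn hmono
    (hM0.trans_le (hmono self_mem_Ici (mem_Ici.2 zero_le_one) zero_le_one)) hlarge hε.le

/-- under conditions (M₁)-(M₂), for every ε > 0 there are constants
`C₁, C₂ > 0` with `M t ≤ C₁ + C₂ * t ^ (θ + ε)` for all `t ≥ 0`. -/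
theorem kirchhoff_coefficient_growth (M : ℝ → ℝ) (R θ : ℝ)
    (hcont : ContinuousOn M (Set.Ici 0))
    (hR : 0 < R) (hC1 : ContDiffOn ℝ 1 M (Set.Ici R))
    (hM0 : 0 < M 0)
    (hmono : MonotoneOn M (Set.Ici 0))
    (hθ : 0 < θ)
    (hAG : ∀ t ≥ (0:ℝ), 0 ≤ (∫ s in (0:ℝ)..t, M s) - M t * t / (θ + 1))
    (hAGtop : Tendsto (fun t => (∫ s in (0:ℝ)..t, M s) - M t * t / (θ + 1)) atTop atTop) :
    ∀ ε > 0, ∃ C₁ > 0, ∃ C₂ > 0, ∀ t ≥ (0:ℝ), M t ≤ C₁ + C₂ * t ^ (θ + ε) :=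
  kirchhoff_coefficient_growth_general M θ hcont hM0 hmono hθ hAG
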